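/- For every fixed k ∈ {0, …, T−1}, e ∈ ℝⁿ, and a ∈ {0,1}, the map g ↦ Q^g_k(e, a) is continuous on ℝ^T (with the sup norm); indeed it is Lipschitz continuous with Lipschitz constant λT. -/

import Mathlib

open MeasureTheory Matrix

/-- State–action value functions of the mean-field sensing problem, indexed by
time-to-go: `Qrev T lam A Γ μ g m e a = Q^g_{T-1-m}(e, a)`, defined by the backward
recursion `Q^g_k(e,a) = λ g_k a + ∫ [ e'ᵀ Γ_{k+1} e' + min_a' Q^g_{k+1}(e', a') ] dμ(w)`
where `e' = (1-a) A e + w` and the terminal value `V^g_T ≡ 0`. -/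
noncomputable def Qrev {n : ℕ} (T : ℕ) (lam : ℝ) (A : Matrix (Fin n) (Fin n) ℝ)
    (Γ : ℕ → Matrix (Fin n) (Fin n) ℝ) (μ : Measure (Fin n → ℝ)) (g : ℕ → ℝ) :
    ℕ → (Fin n → ℝ) → ℝ → ℝ
  | 0, e, a =>
      lam * g (T - 1) * a +
        ∫ w, ((1 - a) • (A *ᵥ e) + w) ⬝ᵥ ((Γ T) *ᵥ ((1 - a) • (A *ᵥ e) + w)) ∂μ
  | m + 1, e, a =>
      lam * g (T - 1 - (m + 1)) * a +
        ∫ w,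
          (((1 - a) • (A *ᵥ e) + w) ⬝ᵥ ((Γ (T - (m + 1))) *ᵥ ((1 - a) • (A *ᵥ e) + w)) +
            min (Qrev T lam A Γ μ g m ((1 - a) • (A *ᵥ e) + w) 0)
              (Qrev T lam A Γ μ g m ((1 - a) • (A *ᵥ e) + w) 1)) ∂μ

/-- `Qval T lam A Γ μ g k e a = Q^g_k(e,a)` for `0 ≤ k ≤ T-1`. -/
noncomputable def Qval {n : ℕ} (T : ℕ) (lam : ℝ) (A : Matrix (Fin n) (Fin n) ℝ)
    (Γ : ℕ → Matrix (Fin n) (Fin n) ℝ) (μ : Measure (Fin n → ℝ)) (g : ℕ → ℝ)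
    (k : ℕ) (e : Fin n → ℝ) (a : ℝ) : ℝ :=
  Qrev T lam A Γ μ g (T - 1 - k) e a

/-- Value of information `VoI^g_k(e) = Q^g_k(e,0) - Q^g_k(e,1)`. -/
noncomputable def VoI {n : ℕ} (T : ℕ) (lam : ℝ) (A : Matrix (Fin n) (Fin n) ℝ)
    (Γ : ℕ → Matrix (Fin n) (Fin n) ℝ) (μ : Measure (Fin n → ℝ)) (g : ℕ → ℝ)
    (k : ℕ) (e : Fin n → ℝ) : ℝ :=
  Qval T lam A Γ μ g k e 0 - Qval T lam A Γ μ g k e 1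

/-- Extension of a finite sequence `g ∈ ℝ^T` to `ℕ → ℝ` (by zero). -/
def extendSeq (T : ℕ) (g : Fin T → ℝ) : ℕ → ℝ :=
  fun j => if h : j < T then g ⟨j, h⟩ else 0

/-- The Boltzmann (logistic) function `σ_α(x) = 1/(1 + exp(-α x))`. -/
noncomputable def boltz (α x : ℝ) : ℝ := (1 + Real.exp (-α * x))⁻¹

/-- The mean-field operator `(𝒯 g)_k = ∫ σ_α(VoI^g_k(e)) dν_k(e)`. -/
noncomputable def Tmf {n : ℕ} (T : ℕ) (lam α : ℝ) (A : Matrix (Fin n) (Fin n) ℝ)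
    (Γ : ℕ → Matrix (Fin n) (Fin n) ℝ) (μ : Measure (Fin n → ℝ))
    (ν : Fin T → Measure (Fin n → ℝ)) (g : Fin T → ℝ) : Fin T → ℝ :=
  fun k => ∫ e, boltz α (VoI T lam A Γ μ (extendSeq T g) (k : ℕ) e) ∂(ν k)

/-!
The dependence on `g` is only through the running costs `λ g_k a`, which enter `Q^g_k` additively.
By backward induction, changing `g` by at most `δ` in sup norm moves the integrand
`e' ↦ e'ᵀ Γ_{k+1} e' + V^g_{k+1}(e')` by at most `λ (T-1-k) δ` everywhere (the `min` defining
`V` is `1`-Lipschitz), and integrating against the probability measure `μ` preserves this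
uniform bound; adding the running cost gives `λ (T-k) δ ≤ λ T δ`. Splitting the integrals needs
integrability: all integrands are measurable with quadratic growth, again by backward induction,
using the finite second moment of `μ`.
-/

section QuadraticGrowth

variable {E F : Type*} [NormedAddCommGroup E] [NormedAddCommGroup F]

def HasQuadraticGrowth (f : E → ℝ) : Prop :=
  ∃ C, 0 ≤ C ∧ ∀ x, |f x| ≤ C * (1 + ‖x‖ ^ 2)

lemma one_add_norm_add_sq_le (v w : E) :
    1 + ‖v + w‖ ^ 2 ≤ 2 * (1 + ‖v‖ ^ 2) * (1 + ‖w‖ ^ 2) := by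
  have h := norm_add_le v w
  have hsq : ‖v + w‖ ^ 2 ≤ (‖v‖ + ‖w‖) ^ 2 := pow_le_pow_left₀ (norm_nonneg _) h 2
  nlinarith [sq_nonneg (‖v‖ - ‖w‖), mul_nonneg (sq_nonneg ‖v‖) (sq_nonneg ‖w‖)]

namespace HasQuadraticGrowth

variable {f h : E → ℝ}

lemma const (c : ℝ) : HasQuadraticGrowth fun _ : E => c :=
  ⟨|c|, abs_nonneg c, fun x =>
    le_mul_of_one_le_right (abs_nonneg c) (le_add_of_nonneg_right (by positivity))⟩

lemma add (hf : HasQuadraticGrowth f) (hh : HasQuadraticGrowth h) :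
    HasQuadraticGrowth fun x => f x + h x := by
  obtain ⟨C, hC0, hC⟩ := hf
  obtain ⟨D, hD0, hD⟩ := hh
  exact ⟨C + D, add_nonneg hC0 hD0, fun x =>
    (abs_add_le _ _).trans ((add_le_add (hC x) (hD x)).trans_eq (add_mul C D _).symm)⟩

lemma min (hf : HasQuadraticGrowth f) (hh : HasQuadraticGrowth h) :
    HasQuadraticGrowth fun x => min (f x) (h x) := by
  obtain ⟨C, hC0, hC⟩ := hf
  obtain ⟨D, hD0, hD⟩ := hh
  refine ⟨max C D, hC0.trans (le_max_left C D), fun x => abs_min_le_max_abs_abs.trans ?_⟩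
  exact max_le ((hC x).trans (by gcongr; exact le_max_left C D))
    ((hD x).trans (by gcongr; exact le_max_right C D))

lemma comp_of_norm_le (hf : HasQuadraticGrowth f) {L : F → E} {K : ℝ}
    (hL : ∀ x, ‖L x‖ ≤ K * ‖x‖) : HasQuadraticGrowth fun x => f (L x) := by
  obtain ⟨C, hC0, hC⟩ := hf
  refine ⟨C * (1 + K ^ 2), by positivity, fun x => (hC (L x)).trans ?_⟩
  have hLx : ‖L x‖ ^ 2 ≤ K ^ 2 * ‖x‖ ^ 2 := by
    rw [← mul_pow]; exact pow_le_pow_left₀ (norm_nonneg _) (hL x) 2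
  rw [mul_assoc]
  gcongr
  nlinarith [sq_nonneg K, sq_nonneg ‖x‖, mul_nonneg (sq_nonneg K) (sq_nonneg ‖x‖)]

lemma exists_abs_comp_add_le (hf : HasQuadraticGrowth f) :
    ∃ C, 0 ≤ C ∧ ∀ v w, |f (v + w)| ≤ C * (1 + ‖v‖ ^ 2) * (1 + ‖w‖ ^ 2) := by
  obtain ⟨C, hC0, hC⟩ := hf
  refine ⟨2 * C, by positivity, fun v w => (hC (v + w)).trans ?_⟩
  calc C * (1 + ‖v + w‖ ^ 2) ≤ C * (2 * (1 + ‖v‖ ^ 2) * (1 + ‖w‖ ^ 2)) := by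
        gcongr; exact one_add_norm_add_sq_le v w
    _ = 2 * C * (1 + ‖v‖ ^ 2) * (1 + ‖w‖ ^ 2) := by ring

variable [MeasurableSpace E] {μ : Measure E}

lemma integrable_comp_add [MeasurableAdd E] [IsFiniteMeasure μ] (hf : HasQuadraticGrowth f)
    (hfm : Measurable f) (hmom : Integrable (fun w => ‖w‖ ^ 2) μ) (v : E) :
    Integrable (fun w => f (v + w)) μ := by
  obtain ⟨C, -, hC⟩ := hf.exists_abs_comp_add_le
  exact (((integrable_const 1).add hmom).const_mul (C * (1 + ‖v‖ ^ 2))).mono'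
    (hfm.comp (measurable_const_add v)).aestronglyMeasurable (ae_of_all _ (hC v))

lemma integral_comp_add [IsFiniteMeasure μ] (hf : HasQuadraticGrowth f)
    (hmom : Integrable (fun w => ‖w‖ ^ 2) μ) :
    HasQuadraticGrowth fun v => ∫ w, f (v + w) ∂μ := by
  obtain ⟨C, hC0, hC⟩ := hf.exists_abs_comp_add_le
  have hint : Integrable (fun w => 1 + ‖w‖ ^ 2) μ := (integrable_const 1).add hmom
  have hM : 0 ≤ ∫ w, (1 + ‖w‖ ^ 2) ∂μ := integral_nonneg fun w => by positivity
  refine ⟨C * ∫ w, (1 + ‖w‖ ^ 2) ∂μ, by positivity, fun v => ?_⟩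
  calc |∫ w, f (v + w) ∂μ| ≤ ∫ w, C * (1 + ‖v‖ ^ 2) * (1 + ‖w‖ ^ 2) ∂μ := by
        rw [← Real.norm_eq_abs]
        exact norm_integral_le_of_norm_le (hint.const_mul (C * (1 + ‖v‖ ^ 2)))
          (ae_of_all _ fun w => (Real.norm_eq_abs _).trans_le (hC v w))
    _ = C * (∫ w, (1 + ‖w‖ ^ 2) ∂μ) * (1 + ‖v‖ ^ 2) := by rw [integral_const_mul]; ring

end HasQuadraticGrowth

end QuadraticGrowth

section Integrals

variable {E : Type*} [MeasurableSpace E] {μ : Measure E}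

lemma measurable_integral_comp_add [Add E] [MeasurableAdd₂ E] [SFinite μ] {f : E → ℝ}
    (hf : Measurable f) : Measurable fun v => ∫ w, f (v + w) ∂μ :=
  (hf.comp measurable_add).stronglyMeasurable.integral_prod_right'.measurable

lemma abs_integral_sub_integral_le [IsProbabilityMeasure μ] {f h : E → ℝ} (hf : Integrable f μ)
    (hh : Integrable h μ) {ε : ℝ} (hε : ∀ x, |f x - h x| ≤ ε) :
    |∫ x, f x ∂μ - ∫ x, h x ∂μ| ≤ ε := by
  rw [← integral_sub hf hh]
  simpa using norm_integral_le_of_norm_le_const (μ := μ) (f := fun x => f x - h x) (ae_of_all _ hε)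

end Integrals

section Matrix

attribute [local instance] Matrix.linftyOpNormedAddCommGroup

variable {n : ℕ}

lemma abs_dotProduct_le (x y : Fin n → ℝ) : |x ⬝ᵥ y| ≤ n * (‖x‖ * ‖y‖) := by
  calc |x ⬝ᵥ y| ≤ ∑ i, |x i| * |y i| := by
        simpa only [dotProduct, abs_mul] using
          Finset.abs_sum_le_sum_abs (fun i => x i * y i) Finset.univ
    _ ≤ ∑ _i : Fin n, ‖x‖ * ‖y‖ := by
        gcongr with i; exacts [norm_le_pi_norm x i, norm_le_pi_norm y i]
    _ = n * (‖x‖ * ‖y‖) := by simp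

lemma hasQuadraticGrowth_dotProduct_mulVec (M : Matrix (Fin n) (Fin n) ℝ) :
    HasQuadraticGrowth fun x : Fin n → ℝ => x ⬝ᵥ (M *ᵥ x) := by
  refine ⟨n * ‖M‖, by positivity, fun x => (abs_dotProduct_le x _).trans ?_⟩
  calc (n : ℝ) * (‖x‖ * ‖M *ᵥ x‖) ≤ n * (‖x‖ * (‖M‖ * ‖x‖)) := by
        gcongr; exact linfty_opNorm_mulVec M x
    _ ≤ n * ‖M‖ * (1 + ‖x‖ ^ 2) := by nlinarith [norm_nonneg M]

lemma norm_smul_mulVec_le (s : ℝ) (M : Matrix (Fin n) (Fin n) ℝ) (x : Fin n → ℝ) :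
    ‖s • (M *ᵥ x)‖ ≤ |s| * ‖M‖ * ‖x‖ := by
  rw [norm_smul, Real.norm_eq_abs, mul_assoc]
  gcongr
  exact linfty_opNorm_mulVec M x

end Matrix
section MeanField

variable {n T : ℕ} {lam : ℝ} {A : Matrix (Fin n) (Fin n) ℝ} {Γ : ℕ → Matrix (Fin n) (Fin n) ℝ}
  {μ : Measure (Fin n → ℝ)}

variable (T lam A Γ μ) in
/-- `costToGoRev T lam A Γ μ g m e' = e'ᵀ Γ_{k+1} e' + V^g_{k+1}(e')` for `k = T - 1 - m`: the
integrand of `Qrev T lam A Γ μ g m`. -/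
noncomputable def costToGoRev (g : ℕ → ℝ) : ℕ → (Fin n → ℝ) → ℝ
  | 0, x => x ⬝ᵥ (Γ T *ᵥ x)
  | m + 1, x =>
      x ⬝ᵥ (Γ (T - (m + 1)) *ᵥ x) +
        min (Qrev T lam A Γ μ g m x 0) (Qrev T lam A Γ μ g m x 1)

lemma Qrev_eq (g : ℕ → ℝ) (m : ℕ) (e : Fin n → ℝ) (a : ℝ) :
    Qrev T lam A Γ μ g m e a =
      lam * g (T - 1 - m) * a + ∫ w, costToGoRev T lam A Γ μ g m ((1 - a) • (A *ᵥ e) + w) ∂μ := by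
  cases m <;> rfl

lemma measurable_Qrev {g : ℕ → ℝ} {m : ℕ} [SFinite μ]
    (hJ : Measurable (costToGoRev T lam A Γ μ g m)) (a : ℝ) :
    Measurable fun e => Qrev T lam A Γ μ g m e a := by
  simp_rw [Qrev_eq]
  exact measurable_const.add
    ((measurable_integral_comp_add hJ).comp (Continuous.measurable (by fun_prop)))

lemma hasQuadraticGrowth_Qrev {g : ℕ → ℝ} {m : ℕ} [IsFiniteMeasure μ]
    (hJ : HasQuadraticGrowth (costToGoRev T lam A Γ μ g m))
    (hmom : Integrable (fun w => ‖w‖ ^ 2) μ) (a : ℝ) :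
    HasQuadraticGrowth fun e => Qrev T lam A Γ μ g m e a := by
  simp_rw [Qrev_eq]
  exact (HasQuadraticGrowth.const _).add
    ((hJ.integral_comp_add hmom).comp_of_norm_le (norm_smul_mulVec_le (1 - a) A))

lemma measurable_and_hasQuadraticGrowth_costToGoRev [IsFiniteMeasure μ]
    (hmom : Integrable (fun w => ‖w‖ ^ 2) μ) (g : ℕ → ℝ) :
    ∀ m, Measurable (costToGoRev T lam A Γ μ g m) ∧
      HasQuadraticGrowth (costToGoRev T lam A Γ μ g m)
  | 0 => ⟨(continuous_id.dotProduct (continuous_const.matrix_mulVec continuous_id)).measurable,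
      hasQuadraticGrowth_dotProduct_mulVec _⟩
  | m + 1 => by
    obtain ⟨hJm, hJg⟩ := measurable_and_hasQuadraticGrowth_costToGoRev hmom g m
    exact ⟨(continuous_id.dotProduct (continuous_const.matrix_mulVec continuous_id)).measurable.add
        ((measurable_Qrev hJm 0).min (measurable_Qrev hJm 1)),
      (hasQuadraticGrowth_dotProduct_mulVec _).add
        ((hasQuadraticGrowth_Qrev hJg hmom 0).min (hasQuadraticGrowth_Qrev hJg hmom 1))⟩

lemma integrable_costToGoRev [IsFiniteMeasure μ] (hmom : Integrable (fun w => ‖w‖ ^ 2) μ)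
    (g : ℕ → ℝ) (m : ℕ) (v : Fin n → ℝ) :
    Integrable (fun w => costToGoRev T lam A Γ μ g m (v + w)) μ :=
  let h := measurable_and_hasQuadraticGrowth_costToGoRev hmom g m
  h.2.integrable_comp_add h.1 hmom v

variable [IsProbabilityMeasure μ] (hmom : Integrable (fun w => ‖w‖ ^ 2) μ)
  {g g' : ℕ → ℝ} {δ : ℝ} (hgg : ∀ j, |g j - g' j| ≤ δ)
include hmom hgg

lemma abs_Qrev_sub_le_of {m : ℕ} {ε : ℝ}
    (hJ : ∀ x, |costToGoRev T lam A Γ μ g m x - costToGoRev T lam A Γ μ g' m x| ≤ ε)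
    (e : Fin n → ℝ) {a : ℝ} (ha : |a| ≤ 1) :
    |Qrev T lam A Γ μ g m e a - Qrev T lam A Γ μ g' m e a| ≤ |lam| * δ + ε := by
  have hδ : 0 ≤ δ := (abs_nonneg _).trans (hgg 0)
  have hcost : |lam * (g (T - 1 - m) - g' (T - 1 - m)) * a| ≤ |lam| * δ := by
    rw [abs_mul, abs_mul]
    calc |lam| * |g (T - 1 - m) - g' (T - 1 - m)| * |a| ≤ |lam| * δ * 1 := by
          gcongr; exact hgg _
      _ = |lam| * δ := mul_one _
  have hint := abs_integral_sub_integral_le (integrable_costToGoRev hmom g m _)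
    (integrable_costToGoRev hmom g' m _) fun w => hJ ((1 - a) • (A *ᵥ e) + w)
  rw [Qrev_eq, Qrev_eq]
  calc _ = |lam * (g (T - 1 - m) - g' (T - 1 - m)) * a +
        (∫ w, costToGoRev T lam A Γ μ g m ((1 - a) • (A *ᵥ e) + w) ∂μ -
          ∫ w, costToGoRev T lam A Γ μ g' m ((1 - a) • (A *ᵥ e) + w) ∂μ)| := by ring_nf
    _ ≤ |lam| * δ + ε := (abs_add_le _ _).trans (add_le_add hcost hint)

lemma abs_costToGoRev_sub_le :
    ∀ (m : ℕ) (x : Fin n → ℝ),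
      |costToGoRev T lam A Γ μ g m x - costToGoRev T lam A Γ μ g' m x| ≤ |lam| * m * δ
  | 0, x => by simp [costToGoRev]
  | m + 1, x => by
    have hQ : ∀ a : ℝ, |a| ≤ 1 →
        |Qrev T lam A Γ μ g m x a - Qrev T lam A Γ μ g' m x a| ≤ |lam| * (m + 1 : ℕ) * δ :=
      fun a ha => (abs_Qrev_sub_le_of hmom hgg (abs_costToGoRev_sub_le m) x ha).trans_eq
        (by push_cast; ring)
    simp only [costToGoRev, add_sub_add_left_eq_sub]
    exact (abs_min_sub_min_le_max _ _ _ _).trans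
      (max_le (hQ 0 (by simp)) (hQ 1 (by simp)))

lemma abs_Qrev_sub_le (m : ℕ) (e : Fin n → ℝ) {a : ℝ} (ha : |a| ≤ 1) :
    |Qrev T lam A Γ μ g m e a - Qrev T lam A Γ μ g' m e a| ≤ |lam| * (m + 1) * δ :=
  (abs_Qrev_sub_le_of hmom hgg (abs_costToGoRev_sub_le hmom hgg m) e ha).trans_eq (by ring)

end MeanField

lemma abs_extendSeq_sub_le {T : ℕ} (g g' : Fin T → ℝ) (j : ℕ) :
    |extendSeq T g j - extendSeq T g' j| ≤ dist g g' := by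
  unfold extendSeq
  split_ifs with h
  · exact (Real.dist_eq _ _).symm.trans_le (dist_le_pi_dist g g' ⟨j, h⟩)
  · simp

theorem Q_continuous_in_mean_field_general
    {n T : ℕ} (hT : 1 ≤ T) (lam : ℝ) (hlam : 0 < lam)
    (A : Matrix (Fin n) (Fin n) ℝ) (Γ : ℕ → Matrix (Fin n) (Fin n) ℝ)
    (μ : Measure (Fin n → ℝ)) [IsProbabilityMeasure μ]
    (hmom : Integrable (fun w => ‖w‖ ^ 2) μ)
    (k : ℕ) (e : Fin n → ℝ) (a : ℝ) (ha : a = 0 ∨ a = 1) :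
    Continuous (fun g : Fin T → ℝ => Qval T lam A Γ μ (extendSeq T g) k e a) ∧
      LipschitzWith (Real.toNNReal (lam * (T : ℝ)))
        (fun g : Fin T → ℝ => Qval T lam A Γ μ (extendSeq T g) k e a) := by
  have hlip : LipschitzWith (Real.toNNReal (lam * (T : ℝ)))
      (fun g : Fin T → ℝ => Qval T lam A Γ μ (extendSeq T g) k e a) := by
    refine LipschitzWith.of_dist_le_mul fun g g' => ?_
    have hm : ((T - 1 - k : ℕ) : ℝ) + 1 ≤ T := by exact_mod_cast (by omega : T - 1 - k + 1 ≤ T)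
    rw [Real.coe_toNNReal _ (by positivity), Real.dist_eq]
    have ha1 : |a| ≤ 1 := by rcases ha with rfl | rfl <;> simp
    calc _ ≤ |lam| * ((T - 1 - k : ℕ) + 1) * dist g g' :=
          abs_Qrev_sub_le hmom (abs_extendSeq_sub_le g g') _ e ha1
      _ ≤ lam * T * dist g g' := by rw [abs_of_pos hlam]; gcongr
  exact ⟨hlip.continuous, hlip⟩

/-- For fixed `k`, `e`, `a ∈ {0,1}`, the map `g ↦ Q^g_k(e,a)` is continuous on
`ℝ^T` (sup norm); indeed it is Lipschitz continuous with Lipschitz constant `λT`. -/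
theorem Q_continuous_in_mean_field
    {n T : ℕ} (hT : 1 ≤ T) (lam : ℝ) (hlam : 0 < lam)
    (A : Matrix (Fin n) (Fin n) ℝ) (Γ : ℕ → Matrix (Fin n) (Fin n) ℝ)
    (hΓ : ∀ k, (Γ k).PosSemidef)
    (μ : Measure (Fin n → ℝ)) [IsProbabilityMeasure μ]
    (hmom : Integrable (fun w => ‖w‖ ^ 2) μ)
    (k : ℕ) (hk : k < T) (e : Fin n → ℝ) (a : ℝ) (ha : a = 0 ∨ a = 1) :
    Continuous (fun g : Fin T → ℝ => Qval T lam A Γ μ (extendSeq T g) k e a) ∧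
      LipschitzWith (Real.toNNReal (lam * (T : ℝ)))
        (fun g : Fin T → ℝ => Qval T lam A Γ μ (extendSeq T g) k e a) :=
  Q_continuous_in_mean_field_general hT lam hlam A Γ μ hmom k e a ha
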